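/- arXiv:2105.06542 — 3 statements merged into one kernel-verified Lean document; each statement's English description precedes it below -/
import Mathlib

section
/- Let p, q, z be complex numbers such that z does not lie on the closed line segment from p to q. Then the contour integral of 1/(w − z) along the segment from p to q equals the principal branch of the complex logarithm of (q − z)/(p − z); explicitly, ∫_{t=0}^{1} (q − p)/(((1 − t)·p + t·q) − z) dt = Log((q − z)/(p − z)). -/
/-!
Dividing by `p - z` maps the segment `[p, q]` onto the segment `[1, r]` with `r = (q - z)/(p - z)`,
and the integral becomes `(r - 1) ∫₀¹ (1 + t (r - 1))⁻¹ dt`, which Mathlib identifies with `Log r`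
(`Complex.log_eq_integral`) as soon as `r` lies in the slit plane. It does: if `r = -s` with
`s ≥ 0`, then `z = (s p + q)/(1 + s)` lies on `[p, q]`.
-/

open Complex intervalIntegral

theorem sub_ne_zero_of_notMem_segment {𝕜 E : Type*} [Semiring 𝕜] [PartialOrder 𝕜] [ZeroLEOneClass 𝕜]
    [AddCommGroup E] [Module 𝕜 E] {p q z : E} (hz : z ∉ segment 𝕜 p q) : p - z ≠ 0 :=
  sub_ne_zero.2 fun h => hz (h ▸ left_mem_segment 𝕜 p q)

theorem Complex.div_sub_mem_slitPlane_of_notMem_segment {p q z : ℂ} (hz : z ∉ segment ℝ p q) :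
    (q - z) / (p - z) ∈ slitPlane := by
  have hpz := sub_ne_zero_of_notMem_segment hz
  rw [mem_slitPlane_iff_not_le_zero]
  intro hr
  obtain ⟨hre, him⟩ := nonpos_iff.1 hr
  obtain ⟨s, hs, hq⟩ : ∃ s : ℝ, 0 ≤ s ∧ q - z = -s * (p - z) :=
    ⟨_, neg_nonneg.2 hre, by rw [← div_eq_iff hpz]; apply Complex.ext <;> simp [him]⟩
  have hs1 : (1 + s : ℂ) ≠ 0 := by exact_mod_cast (by positivity : 1 + s ≠ 0)
  refine hz ⟨s / (1 + s), 1 / (1 + s), by positivity, by positivity, by field_simp; ring, ?_⟩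
  simp only [real_smul]
  push_cast
  field_simp
  linear_combination hq

/-- The contour integral of `1/(w - z)` along the straight segment from `p` to `q`,
avoiding `z`, equals the principal complex logarithm of `(q - z)/(p - z)`. -/
theorem stmt_0 (p q z : ℂ) (hz : z ∉ segment ℝ p q) :
    (∫ t in (0:ℝ)..1, (q - p) / (((1 - (t : ℂ)) * p + (t : ℂ) * q) - z))
      = Complex.log ((q - z) / (p - z)) := by
  have hpz := sub_ne_zero_of_notMem_segment hz
  set r := (q - z) / (p - z)
  have hr : 1 + (r - 1) ∈ slitPlane := by
    rw [add_sub_cancel]; exact div_sub_mem_slitPlane_of_notMem_segment hz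
  calc (∫ t in (0:ℝ)..1, (q - p) / (((1 - (t : ℂ)) * p + (t : ℂ) * q) - z))
      = ∫ t in (0:ℝ)..1, (r - 1) * (1 + t • (r - 1))⁻¹ := by
        refine integral_congr fun t _ => ?_
        simp only [r, real_smul]
        field_simp
        ring
    _ = log (1 + (r - 1)) := by rw [integral_const_mul, log_eq_integral hr]
    _ = log r := by rw [add_sub_cancel]
end

section
/- Let p, q, z be complex numbers such that z does not lie on the closed line segment from p to q. Then the real part of (1/(2πi)) · ∫_{t=0}^{1} (q − p)/(((1 − t)·p + t·q) − z) dt equals (1/(2π)) · arg((q − z)/(p − z)), where arg is the principal argument. -/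
/-!
`t ↦ log (((1 - t) p + t q - z) / (p - z))` is a primitive of the integrand on `[0, 1]`: the
quotient never leaves the slit plane, since if `x - z = r (p - z)` with `r ≤ 0` then `z` lies
between `p` and `x`. So the integral is `log ((q - z) / (p - z))`, and dividing by `2πi` turns
its imaginary part, the argument, into the real part.
-/

open Complex Real

namespace Complex

theorem sub_div_sub_mem_slitPlane {p x z : ℂ} (hz : z ∉ segment ℝ p x) :
    (x - z) / (p - z) ∈ slitPlane := by
  have hpz : p - z ≠ 0 := sub_ne_zero.2 fun h => hz (h ▸ left_mem_segment ℝ p x)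
  rw [mem_slitPlane_iff_not_le_zero, nonpos_iff]
  rintro ⟨hre, him⟩
  set r := ((x - z) / (p - z)).re
  have hx : x - z = (-r) • (z - p) := by
    have : (x - z) / (p - z) = r := ext rfl (by simpa using him)
    rw [div_eq_iff hpz] at this
    rw [this, real_smul]
    push_cast
    ring
  exact hz (mem_segment_iff_sameRay.2 (hx ▸ SameRay.sameRay_nonneg_smul_right _ (neg_nonneg.2 hre)))

theorem one_sub_mul_add_mul_mem_segment {p q : ℂ} {t : ℝ} (ht : t ∈ Set.Icc (0 : ℝ) 1) :
    (1 - (t : ℂ)) * p + t * q ∈ segment ℝ p q := by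
  rw [segment_eq_image]
  exact ⟨t, ht, by simp [real_smul]⟩

theorem hasDerivAt_log_affine_sub_div {p q z : ℂ} {t : ℝ} (hpz : p ≠ z)
    (ht : ((1 - (t : ℂ)) * p + t * q - z) / (p - z) ∈ slitPlane) :
    HasDerivAt (fun s : ℝ => log (((1 - (s : ℂ)) * p + s * q - z) / (p - z)))
      ((q - p) / ((1 - (t : ℂ)) * p + t * q - z)) t := by
  have hline : HasDerivAt (fun s : ℝ => ((1 - (s : ℂ)) * p + s * q - z) / (p - z))
      ((q - p) / (p - z)) t := by
    have h := (((hasDerivAt_id t).ofReal_comp.mul_const (q - p)).const_add (p - z)).div_const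
      (p - z)
    rw [ofReal_one, one_mul] at h
    refine h.congr_of_eventuallyEq (Filter.Eventually.of_forall fun s => ?_)
    simp only [id]
    ring
  convert hline.clog_real ht using 1
  rw [div_div_div_cancel_right₀ (sub_ne_zero.2 hpz)]

theorem integral_div_affine_sub_eq_log {p q z : ℂ} (hz : z ∉ segment ℝ p q) :
    ∫ t in (0 : ℝ)..1, (q - p) / ((1 - (t : ℂ)) * p + t * q - z) = log ((q - z) / (p - z)) := by
  have hpz : p ≠ z := fun h => hz (h ▸ left_mem_segment ℝ p q)
  have hsub : ∀ t ∈ Set.uIcc (0 : ℝ) 1, z ∉ segment ℝ p ((1 - (t : ℂ)) * p + t * q) := by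
    intro t ht hzt
    rw [Set.uIcc_of_le zero_le_one] at ht
    exact hz <| (convex_segment p q).segment_subset (left_mem_segment ℝ p q)
      (one_sub_mul_add_mul_mem_segment ht) hzt
  have hderiv := fun t ht => hasDerivAt_log_affine_sub_div hpz (sub_div_sub_mem_slitPlane (hsub t ht))
  have hcont : ContinuousOn (fun t : ℝ => (q - p) / ((1 - (t : ℂ)) * p + t * q - z)) (Set.uIcc 0 1) :=
    continuousOn_const.div (by fun_prop) fun t ht h => by
      rw [Set.uIcc_of_le zero_le_one] at ht
      exact hz (sub_eq_zero.1 h ▸ one_sub_mul_add_mul_mem_segment ht)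
  rw [intervalIntegral.integral_eq_sub_of_hasDerivAt hderiv hcont.intervalIntegrable]
  simp [div_self (sub_ne_zero.2 hpz)]

theorem re_one_div_two_pi_I_mul (w : ℂ) : (1 / (2 * (π : ℂ) * I) * w).re = w.im / (2 * π) := by
  rw [one_div, mul_inv, inv_I, mul_neg, neg_mul, neg_re, mul_assoc, ← ofReal_ofNat, ← ofReal_mul, ← ofReal_inv, re_ofReal_mul,
    I_mul_re]
  ring

end Complex

/-- The real part of `(1/(2πi))` times the contour integral of `1/(w - z)` along the
segment from `p` to `q` avoiding `z` equals `(1/(2π))` times the principal argument of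
`(q - z)/(p - z)` (Lemma 5.3 of the paper). -/
theorem stmt_1 (p q z : ℂ) (hz : z ∉ segment ℝ p q) :
    ((1 / (2 * (Real.pi : ℂ) * Complex.I)) *
        ∫ t in (0:ℝ)..1, (q - p) / (((1 - (t : ℂ)) * p + (t : ℂ) * q) - z)).re
      = (1 / (2 * Real.pi)) * Complex.arg ((q - z) / (p - z)) := by
  rw [integral_div_affine_sub_eq_log hz, re_one_div_two_pi_I_mul, log_im, one_div_mul_eq_div]
end

section
/- Let n ≥ 1, let z₁, …, zₙ ∈ ℂ and α₁, …, αₙ ∈ ℝ with α̃ := α₁ + ⋯ + αₙ ≠ 0, and set c := (1/α̃)·(α₁z₁ + ⋯ + αₙzₙ). Then there exist constants C > 0 and R > 0 (with R > max(|c|, |z₁|, …, |zₙ|)) such that for all z ∈ ℂ with |z| ≥ R one has |α̃/(z − c) − Σᵢ αᵢ/(z − zᵢ)| ≤ C/|z|³. Equivalently, the difference of magnetic vector potentials Ã_{α̃,c} − Σᵢ A_{zᵢ,αᵢ} has Euclidean norm O(|z|⁻³) as |z| → ∞, where A_{s,α}(x,y) = −α·( −(y−b)/((x−a)²+(y−b)²),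 (x−a)/((x−a)²+(y−b)²) ) for s = (a,b). -/
/-!
Expanding `β / (w - a) = β / w + β a / w² + β a² / (w² (w - a))` for each solenoid, the `1/w`
terms cancel because `α̃` is the total flux and the `1/w²` terms cancel because `α̃ c = Σ αᵢ zᵢ`.
What is left are the remainders, each `O(|w|⁻³)` once `|w|` is at least twice every `|zᵢ|` and `|c|`.
-/

open Finset

section Expansion

variable {K : Type*} [Field K]

theorem div_sub_eq_add_add_remainder (β a : K) {w : K} (hw : w ≠ 0) (hwa : w - a ≠ 0) :
    β / (w - a) = β / w + β * a / w ^ 2 + β * a ^ 2 / (w ^ 2 * (w - a)) := by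
  field_simp
  ring

theorem sum_div_sub_eq_add_add_sum_remainder {ι : Type*} (s : Finset ι) (β a : ι → K) {w : K}
    (hw : w ≠ 0) (hwa : ∀ i ∈ s, w - a i ≠ 0) :
    ∑ i ∈ s, β i / (w - a i) = (∑ i ∈ s, β i) / w + (∑ i ∈ s, β i * a i) / w ^ 2
      + ∑ i ∈ s, β i * a i ^ 2 / (w ^ 2 * (w - a i)) := by
  rw [sum_congr rfl fun i hi => div_sub_eq_add_add_remainder (β i) (a i) hw (hwa i hi),
    sum_add_distrib, sum_add_distrib, sum_div, sum_div]

end Expansion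

section Remainder

variable {K : Type*} [NormedField K]

theorem half_norm_le_norm_sub {a w : K} (ha : ‖a‖ ≤ ‖w‖ / 2) : ‖w‖ / 2 ≤ ‖w - a‖ := by
  have := norm_sub_norm_le w a
  linarith

theorem sub_ne_zero_of_norm_le_half {a w : K} (hw : w ≠ 0) (ha : ‖a‖ ≤ ‖w‖ / 2) : w - a ≠ 0 :=
  norm_pos_iff.mp <| (half_pos (norm_pos_iff.mpr hw)).trans_le (half_norm_le_norm_sub ha)

theorem norm_remainder_le (β : K) {a w : K} (hw : w ≠ 0) (ha : ‖a‖ ≤ ‖w‖ / 2) :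
    ‖β * a ^ 2 / (w ^ 2 * (w - a))‖ ≤ 2 * (‖β‖ * ‖a‖ ^ 2) / ‖w‖ ^ 3 := by
  have hw' : 0 < ‖w‖ := norm_pos_iff.mpr hw
  rw [norm_div, norm_mul, norm_mul, norm_pow, norm_pow]
  calc ‖β‖ * ‖a‖ ^ 2 / (‖w‖ ^ 2 * ‖w - a‖)
      ≤ ‖β‖ * ‖a‖ ^ 2 / (‖w‖ ^ 2 * (‖w‖ / 2)) := by
        gcongr
        exact half_norm_le_norm_sub ha
    _ = 2 * (‖β‖ * ‖a‖ ^ 2) / ‖w‖ ^ 3 := by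
        field_simp

theorem norm_sum_remainder_le {ι : Type*} (s : Finset ι) (β a : ι → K) {w : K} (hw : w ≠ 0)
    (ha : ∀ i ∈ s, ‖a i‖ ≤ ‖w‖ / 2) :
    ‖∑ i ∈ s, β i * a i ^ 2 / (w ^ 2 * (w - a i))‖
      ≤ 2 * ∑ i ∈ s, ‖β i‖ * ‖a i‖ ^ 2 / ‖w‖ ^ 3 := by
  rw [mul_sum]
  refine (norm_sum_le _ _).trans (sum_le_sum fun i hi => ?_)
  rw [← mul_div_assoc]
  exact norm_remainder_le (β i) hw (ha i hi)

theorem norm_sum_div_sub_sub_sum_div_le_of_center {ι : Type*} (s : Finset ι) (β a : ι → K)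
    {c w : K} (hc : (∑ i ∈ s, β i) * c = ∑ i ∈ s, β i * a i) (hw : w ≠ 0)
    (hcw : ‖c‖ ≤ ‖w‖ / 2) (haw : ∀ i ∈ s, ‖a i‖ ≤ ‖w‖ / 2) :
    ‖(∑ i ∈ s, β i) / (w - c) - ∑ i ∈ s, β i / (w - a i)‖
      ≤ 2 * (‖∑ i ∈ s, β i‖ * ‖c‖ ^ 2 + ∑ i ∈ s, ‖β i‖ * ‖a i‖ ^ 2) / ‖w‖ ^ 3 := by
  rw [div_sub_eq_add_add_remainder _ _ hw (sub_ne_zero_of_norm_le_half hw hcw),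
    sum_div_sub_eq_add_add_sum_remainder _ _ _ hw fun i hi =>
      sub_ne_zero_of_norm_le_half hw (haw i hi), hc, add_sub_add_left_eq_sub]
  calc _ ≤ ‖(∑ i ∈ s, β i) * c ^ 2 / (w ^ 2 * (w - c))‖
        + ‖∑ i ∈ s, β i * a i ^ 2 / (w ^ 2 * (w - a i))‖ := norm_sub_le _ _
    _ ≤ 2 * (‖∑ i ∈ s, β i‖ * ‖c‖ ^ 2) / ‖w‖ ^ 3
        + 2 * ∑ i ∈ s, ‖β i‖ * ‖a i‖ ^ 2 / ‖w‖ ^ 3 :=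
      add_le_add (norm_remainder_le _ hw hcw) (norm_sum_remainder_le s β a hw haw)
    _ = _ := by rw [← sum_div]; ring

end Remainder

theorem stmt_4_general (n : ℕ) (z : Fin n → ℂ) (α : Fin n → ℝ)
    (hα : (∑ i, α i) ≠ 0) :
    let αt : ℝ := ∑ i, α i
    let c : ℂ := ((αt : ℂ))⁻¹ * ∑ i, (α i : ℂ) * z i
    ∃ C > (0:ℝ), ∃ R > (0:ℝ),
      (‖c‖ < R ∧ ∀ i, ‖z i‖ < R) ∧
      ∀ w : ℂ, R ≤ ‖w‖ →
        ‖(αt : ℂ) / (w - c) - ∑ i, (α i : ℂ) / (w - z i)‖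
          ≤ C / (‖w‖) ^ 3 := by
  intro αt c
  have hαt : (αt : ℂ) = ∑ i, (α i : ℂ) := Complex.ofReal_sum _ _
  have hc : (αt : ℂ) * c = ∑ i, (α i : ℂ) * z i :=
    mul_inv_cancel_left₀ (Complex.ofReal_ne_zero.mpr hα) _
  set S := ‖c‖ + ∑ i, ‖z i‖
  have hcS : ‖c‖ ≤ S := le_add_of_nonneg_right (sum_nonneg fun i _ => norm_nonneg _)
  have hzS : ∀ i, ‖z i‖ ≤ S := fun i =>
    (single_le_sum (fun j _ => norm_nonneg (z j)) (mem_univ i)).trans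
      (le_add_of_nonneg_left (norm_nonneg c))
  have hS : 0 ≤ S := (norm_nonneg c).trans hcS
  set B := ‖(αt : ℂ)‖ * ‖c‖ ^ 2 + ∑ i, ‖(α i : ℂ)‖ * ‖z i‖ ^ 2
  have hB : 0 ≤ B := by positivity
  refine ⟨2 * B + 1, by positivity, 2 * S + 1, by positivity,
    ⟨by linarith, fun i => by linarith [hzS i]⟩, fun w hw => ?_⟩
  have hnear : ∀ a : ℂ, ‖a‖ ≤ S → ‖a‖ ≤ ‖w‖ / 2 := fun a ha => by linarith
  have hw0 : w ≠ 0 := norm_pos_iff.mp (by linarith)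
  calc _ ≤ 2 * B / ‖w‖ ^ 3 := by
        rw [hαt] at hc ⊢
        simpa only [B, hαt] using norm_sum_div_sub_sub_sum_div_le_of_center univ
          (fun i => (α i : ℂ)) z hc hw0 (hnear c hcS) fun i _ => hnear _ (hzS i)
    _ ≤ (2 * B + 1) / ‖w‖ ^ 3 := by gcongr; linarith

/-- Cancellation estimate for the regularization (Section 5 of the paper): with the
comparison solenoid at the flux-weighted center of mass `c` and total flux `α̃`, the
difference `α̃/(z - c) - Σᵢ αᵢ/(z - zᵢ)` is `O(|z|⁻³)` as `|z| → ∞`. -/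
theorem stmt_4 (n : ℕ) (hn : 1 ≤ n) (z : Fin n → ℂ) (α : Fin n → ℝ)
    (hα : (∑ i, α i) ≠ 0) :
    let αt : ℝ := ∑ i, α i
    let c : ℂ := ((αt : ℂ))⁻¹ * ∑ i, (α i : ℂ) * z i
    ∃ C > (0:ℝ), ∃ R > (0:ℝ),
      (‖c‖ < R ∧ ∀ i, ‖z i‖ < R) ∧
      ∀ w : ℂ, R ≤ ‖w‖ →
        ‖(αt : ℂ) / (w - c) - ∑ i, (α i : ℂ) / (w - z i)‖
          ≤ C / (‖w‖) ^ 3 :=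
  stmt_4_general n z α hα
end
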